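/- Monotonicity of quantum vs classical filtering error: for the scalar Riccati equation dΣ/dt = (γ/(1+ν))(ν−Σ)(1+Σ), the solution Σ(t;ν) with fixed initial condition Σ₀ ≥ 0 is monotone nondecreasing in the noise parameter ν ≥ 0 for each t ≥ 0; in particular the error at ν = 0 (zero temperature) lower-bounds the error for any positive temperature. -/
import Mathlib

open Set Filter Topology

/-- One-sided Grönwall-type invariance: if `f 0 ≤ 0`, `f` is differentiable on `[0,∞)`,
and on every compact interval there is `K` with `f' t ≤ K * f t` whenever `f t ≥ 0`,
then `f t ≤ 0` for all `t ≥ 0`. -/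
lemma nonpos_of_deriv_le (f f' : ℝ → ℝ)
    (hd : ∀ t, 0 ≤ t → HasDerivAt f (f' t) t)
    (hf0 : f 0 ≤ 0)
    (hb : ∀ T : ℝ, 0 < T → ∃ K : ℝ, ∀ t ∈ Icc (0:ℝ) T, 0 ≤ f t → f' t ≤ K * f t) :
    ∀ t, 0 ≤ t → f t ≤ 0 := by
  have cont : ContinuousOn f (Ici 0) := fun t ht =>
    (hd t ht).continuousAt.continuousWithinAt
  intro t₁ ht₁
  rcases eq_or_lt_of_le ht₁ with h | h
  · rwa [← h]
  by_contra hpos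
  push_neg at hpos
  obtain ⟨K, hK⟩ := hb t₁ h
  set A : Set ℝ := {t | t ∈ Icc (0:ℝ) t₁ ∧ f t ≤ 0} with hA
  have hA0 : (0:ℝ) ∈ A := ⟨⟨le_refl 0, ht₁⟩, hf0⟩
  have hAne : A.Nonempty := ⟨0, hA0⟩
  have hAbdd : BddAbove A := ⟨t₁, fun x hx => hx.1.2⟩
  have hAclosed : IsClosed A := by
    have h1 : A = Icc (0:ℝ) t₁ ∩ f ⁻¹' (Iic 0) := by
      ext x
      simp only [hA, mem_setOf_eq, mem_inter_iff, mem_preimage, mem_Iic]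
    rw [h1]
    exact (cont.mono (Icc_subset_Ici_self)).preimage_isClosed_of_isClosed
      isClosed_Icc isClosed_Iic
  set t₀ := sSup A with ht₀def
  have ht₀A : t₀ ∈ A := hAclosed.csSup_mem hAne hAbdd
  have ht₀0 : 0 ≤ t₀ := ht₀A.1.1
  have ht₀le : t₀ ≤ t₁ := ht₀A.1.2
  have ht₀f : f t₀ ≤ 0 := ht₀A.2
  have ht₀lt : t₀ < t₁ := lt_of_le_of_ne ht₀le fun heq =>
    absurd (heq ▸ ht₀f) (not_le.2 hpos)
  have hposmid : ∀ x ∈ Ioc t₀ t₁, 0 < f x := by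
    intro x hx
    by_contra hfx
    push_neg at hfx
    have : x ∈ A := ⟨⟨le_trans ht₀0 hx.1.le, hx.2⟩, hfx⟩
    exact absurd (le_csSup hAbdd this) (not_le.2 hx.1)
  -- f t₀ ≥ 0 from the right
  have hge : 0 ≤ f t₀ := by
    have hne : (𝓝[Ioc t₀ t₁] t₀).NeBot := by
      apply mem_closure_iff_nhdsWithin_neBot.1
      rw [closure_Ioc ht₀lt.ne]
      exact ⟨le_refl _, ht₀lt.le⟩
    have htend : Tendsto f (𝓝[Ioc t₀ t₁] t₀) (𝓝 (f t₀)) :=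
      (cont t₀ ht₀0).mono fun x hx => le_trans ht₀0 hx.1.le
    exact ge_of_tendsto htend
      (eventually_nhdsWithin_of_forall fun x hx => (hposmid x hx).le)
  -- Grönwall on [t₀, t₁]
  have hcont' : ContinuousOn f (Icc t₀ t₁) :=
    cont.mono (Icc_subset_Ici_self.trans (Ici_subset_Ici.2 ht₀0))
  have hf' : ∀ x ∈ Ico t₀ t₁, ∀ r : ℝ, f' x < r →
      ∃ᶠ z in 𝓝[>] x, (z - x)⁻¹ * (f z - f x) < r := by
    intro x hx r hr
    have hdx : HasDerivWithinAt f (f' x) (Ioi x) x :=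
      (hd x (le_trans ht₀0 hx.1)).hasDerivWithinAt
    have hslope : Tendsto (slope f x) (𝓝[>] x) (𝓝 (f' x)) := by
      have h2 := hasDerivWithinAt_iff_tendsto_slope.1 hdx
      have hset : Ioi x \ {x} = Ioi x :=
        Set.diff_singleton_eq_self (fun h => lt_irrefl x h)
      rwa [hset] at h2
    have : ∀ᶠ z in 𝓝[>] x, slope f x z < r :=
      hslope.eventually_lt_const hr
    refine this.frequently.mono fun z hz => ?_
    simpa [slope_def_field, div_eq_inv_mul] using hz
  have hbound : ∀ x ∈ Ico t₀ t₁, f' x ≤ K * f x + 0 := by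
    intro x hx
    rw [add_zero]
    have hfx : 0 ≤ f x := by
      rcases eq_or_lt_of_le hx.1 with h' | h'
      · rwa [← h']
      · exact (hposmid x ⟨h', hx.2.le⟩).le
    exact hK x ⟨le_trans ht₀0 hx.1, hx.2.le⟩ hfx
  have := le_gronwallBound_of_liminf_deriv_right_le hcont' hf'
    (show f t₀ ≤ 0 from ht₀f) hbound t₁ ⟨ht₀lt.le, le_refl _⟩
  rw [gronwallBound_ε0_δ0] at this
  exact absurd this (not_le.2 hpos)

/-- Monotonicity of the quantum filtering error in the noise parameter: for fixed
`γ > 0` and initial condition `S₀ ≥ 0`, if `S₁` and `S₂` solve the Riccati equation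
`dS/dt = (γ/(1+ν))(ν−S)(1+S)` with noise parameters `ν₁ ≤ ν₂` respectively, then
`S₁(t) ≤ S₂(t)` for all `t ≥ 0`; in particular the zero-temperature error
lower-bounds the error at any positive temperature. -/
theorem riccati_monotone_in_noise (γ S₀ ν₁ ν₂ : ℝ) (hγ : 0 < γ)
    (hν₁ : 0 ≤ ν₁) (hν₂ : 0 ≤ ν₂) (hν : ν₁ ≤ ν₂) (hS₀ : 0 ≤ S₀)
    (S₁ S₂ : ℝ → ℝ) (h₁0 : S₁ 0 = S₀) (h₂0 : S₂ 0 = S₀)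
    (hode₁ : ∀ t : ℝ, 0 ≤ t →
      HasDerivAt S₁ ((γ / (1 + ν₁)) * (ν₁ - S₁ t) * (1 + S₁ t)) t)
    (hode₂ : ∀ t : ℝ, 0 ≤ t →
      HasDerivAt S₂ ((γ / (1 + ν₂)) * (ν₂ - S₂ t) * (1 + S₂ t)) t) :
    ∀ t : ℝ, 0 ≤ t → S₁ t ≤ S₂ t := by
  have hp : (0:ℝ) < 1 + ν₁ := by linarith
  have hq : (0:ℝ) < 1 + ν₂ := by linarith
  set f : ℝ → ℝ := fun t => S₁ t - S₂ t with hf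
  set f' : ℝ → ℝ := fun t =>
    (γ / (1 + ν₁)) * (ν₁ - S₁ t) * (1 + S₁ t)
      - (γ / (1 + ν₂)) * (ν₂ - S₂ t) * (1 + S₂ t) with hf'
  have hd : ∀ t, 0 ≤ t → HasDerivAt f (f' t) t := fun t ht =>
    (hode₁ t ht).sub (hode₂ t ht)
  have hF : ∀ b : ℝ, (γ / (1 + ν₁)) * (ν₁ - b) * (1 + b)
      ≤ (γ / (1 + ν₂)) * (ν₂ - b) * (1 + b) := by
    intro b
    have hkey : (γ / (1 + ν₂)) * (ν₂ - b) * (1 + b)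
        - (γ / (1 + ν₁)) * (ν₁ - b) * (1 + b)
        = γ * (ν₂ - ν₁) * (1 + b) ^ 2 / ((1 + ν₁) * (1 + ν₂)) := by
      field_simp
      ring
    have hnn : 0 ≤ γ * (ν₂ - ν₁) * (1 + b) ^ 2 / ((1 + ν₁) * (1 + ν₂)) := by
      apply div_nonneg
      · have : 0 ≤ ν₂ - ν₁ := by linarith
        positivity
      · positivity
    linarith [hkey ▸ hnn]
  -- key pointwise estimate: f' t ≤ m t * f t with m t = (γ/(1+ν₁))*(ν₁-1-S₁ t-S₂ t)
  set m : ℝ → ℝ := fun t => (γ / (1 + ν₁)) * (ν₁ - 1 - S₁ t - S₂ t) with hm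
  have hest : ∀ t : ℝ, f' t ≤ m t * f t := by
    intro t
    have hdiff : (γ / (1 + ν₁)) * (ν₁ - S₁ t) * (1 + S₁ t)
        - m t * f t = (γ / (1 + ν₁)) * (ν₁ - S₂ t) * (1 + S₂ t) := by
      simp only [hm, hf]
      ring
    have := hF (S₂ t)
    simp only [hf']
    linarith
  have key := nonpos_of_deriv_le f f' hd
    (by simp [hf, h₁0, h₂0])
    (by
      intro T hT
      have hmc : ContinuousOn m (Icc (0:ℝ) T) := by
        apply ContinuousOn.mul continuousOn_const
        apply ContinuousOn.sub
        apply ContinuousOn.sub continuousOn_const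
        · exact fun t ht => (hode₁ t ht.1).continuousAt.continuousWithinAt
        · exact fun t ht => (hode₂ t ht.1).continuousAt.continuousWithinAt
      obtain ⟨K, hK⟩ := isCompact_Icc.exists_bound_of_continuousOn hmc
      refine ⟨K, fun t ht hft => ?_⟩
      calc f' t ≤ m t * f t := hest t
        _ ≤ K * f t := by
            apply mul_le_mul_of_nonneg_right _ hft
            exact le_trans (le_abs_self _) (by simpa using hK t ht))
  intro t ht
  have := key t ht
  simpa [hf, sub_nonpos] using this
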